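/- arXiv:1909.08561 — 3 statements merged into one kernel-verified Lean document; each statement's English description precedes it below -/
import Mathlib

section
/- Let n ≥ 4 and let M be an n×n symmetric positive definite matrix with integer entries whose entries have greatest common divisor 1, with associated quadratic form Q(v) = vᵀMv. Let A_{a,m} be an admissible arithmetic progression such that every element of A_{a,m} is represented by Q over the p-adic integers ℤ_p for every prime p. Then some element of A_{a,m} is represented by Q over ℤ, i.e., there exist λ ∈ A_{a,m} and v ∈ ℤ^n with vᵀMv = λ. -/
open Matrix

/-- The arithmetic progression `A_{a,m} = {a + m·x : x ∈ ℕ ∪ {0}}`. -/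
def AP (a m : ℕ) : Set ℕ := {n | ∃ x : ℕ, n = a + m * x}

/-- `A_{a,m}` (with `0 < a < m`) is admissible if `ord_p a < ord_p m`
for every prime `p` dividing `m`. -/
def Admissible (a m : ℕ) : Prop :=
  0 < a ∧ a < m ∧ ∀ p : ℕ, p.Prime → p ∣ m → padicValNat p a < padicValNat p m

/-!
Reducing the `p`-adic representations of `a` modulo the prime-power parts of `m` and gluing
them with the Chinese remainder theorem gives an integer vector `w` with `Q(w) ≡ a (mod m)`.
As `Q(w) ≥ 0` and `a < m`, the value `Q(w)` itself lies in `A_{a,m}`.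
-/

namespace Matrix

variable {ι : Type*} [Fintype ι]

def RepresentsOver (M : Matrix ι ι ℤ) (R : Type*) [CommRing R] (a : ℕ) : Prop :=
  ∃ v : ι → R, v ⬝ᵥ M.map (Int.cast : ℤ → R) *ᵥ v = a

theorem map_dotProduct_mulVec_map_intCast {R S : Type*} [CommRing R] [CommRing S]
    (f : R →+* S) (M : Matrix ι ι ℤ) (v : ι → R) :
    f (v ⬝ᵥ M.map (Int.cast : ℤ → R) *ᵥ v) =
      (f ∘ v) ⬝ᵥ M.map (Int.cast : ℤ → S) *ᵥ (f ∘ v) := by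
  rw [RingHom.map_dotProduct]
  congr 1
  funext i
  rw [Function.comp_apply, RingHom.map_mulVec, Matrix.map_map]
  congr
  ext z
  exact map_intCast f z

namespace RepresentsOver

variable {M : Matrix ι ι ℤ} {a : ℕ}

theorem map {R S : Type*} [CommRing R] [CommRing S] (f : R →+* S) (h : M.RepresentsOver R a) :
    M.RepresentsOver S a := by
  obtain ⟨v, hv⟩ := h
  exact ⟨f ∘ v, by rw [← map_dotProduct_mulVec_map_intCast, hv, map_natCast]⟩

theorem prod {R S : Type*} [CommRing R] [CommRing S] (hR : M.RepresentsOver R a)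
    (hS : M.RepresentsOver S a) : M.RepresentsOver (R × S) a := by
  obtain ⟨v, hv⟩ := hR
  obtain ⟨w, hw⟩ := hS
  refine ⟨fun i => (v i, w i), Prod.ext ?_ ?_⟩
  · exact (map_dotProduct_mulVec_map_intCast (RingHom.fst R S) M _).trans hv
  · exact (map_dotProduct_mulVec_map_intCast (RingHom.snd R S) M _).trans hw

theorem zmod_mul {m k : ℕ} (hmk : m.Coprime k) (hm : M.RepresentsOver (ZMod m) a)
    (hk : M.RepresentsOver (ZMod k) a) : M.RepresentsOver (ZMod (m * k)) a :=
  (hm.prod hk).map (ZMod.chineseRemainder hmk).symm.toRingHom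

theorem zmod_of_forall_padicInt (h : ∀ (p : ℕ) [Fact p.Prime], M.RepresentsOver ℤ_[p] a)
    {m : ℕ} (hm : m ≠ 0) : M.RepresentsOver (ZMod m) a := by
  induction m using Nat.recOnPrimeCoprime with
  | zero => exact absurd rfl hm
  | prime_pow p k hp =>
    have : Fact p.Prime := ⟨hp⟩
    exact (h p).map (PadicInt.toZModPow k)
  | coprime m k hm1 hk1 hmk ihm ihk =>
    exact zmod_mul hmk (ihm (by omega)) (ihk (by omega))

theorem exists_intModEq {m : ℕ} (h : M.RepresentsOver (ZMod m) a) :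
    ∃ w : ι → ℤ, w ⬝ᵥ M *ᵥ w ≡ a [ZMOD m] := by
  obtain ⟨v, hv⟩ := h
  refine ⟨fun i => (v i).cast, (ZMod.intCast_eq_intCast_iff _ _ _).mp ?_⟩
  have hlift : (Int.castRingHom (ZMod m)) ∘ (fun i => ((v i).cast : ℤ)) = v :=
    funext fun i => ZMod.intCast_zmod_cast (v i)
  have := map_dotProduct_mulVec_map_intCast (Int.castRingHom (ZMod m)) M fun i => (v i).cast
  have hid : M.map (Int.cast : ℤ → ℤ) = M := by ext; simp
  rw [hlift, hv, hid] at this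
  simpa using this

end RepresentsOver

end Matrix

theorem toNat_mem_AP_of_modEq {a m : ℕ} {c : ℤ} (ham : a < m) (hc : 0 ≤ c)
    (h : c ≡ a [ZMOD m]) : c.toNat ∈ AP a m := by
  have hmod : c % m = a := by
    rw [h, Int.emod_eq_of_lt (Int.natCast_nonneg a) (by exact_mod_cast ham)]
  have hdiv : 0 ≤ c / m := Int.ediv_nonneg hc (Int.natCast_nonneg m)
  refine ⟨(c / m).toNat, ?_⟩
  have := Int.emod_add_mul_ediv c m
  rw [hmod, ← Int.toNat_of_nonneg hdiv] at this
  omega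

theorem locally_represented_AP_meets_represented_set_general
    (n : ℕ) (M : Matrix (Fin n) (Fin n) ℤ)
    (hpos : ∀ v : Fin n → ℤ, v ≠ 0 → 0 < v ⬝ᵥ M.mulVec v)
    (a m : ℕ) (hadm : Admissible a m)
    (hloc : ∀ N ∈ AP a m, ∀ (p : ℕ) (_ : Fact p.Prime),
      ∃ v : Fin n → ℤ_[p],
        v ⬝ᵥ (M.map (Int.cast : ℤ → ℤ_[p])).mulVec v = (N : ℤ_[p])) :
    ∃ N ∈ AP a m, ∃ v : Fin n → ℤ, v ⬝ᵥ M.mulVec v = (N : ℤ) := by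
  obtain ⟨-, ham, -⟩ := hadm
  have hlocal : ∀ (p : ℕ) [Fact p.Prime], M.RepresentsOver ℤ_[p] a :=
    fun p hp => hloc a ⟨0, by ring⟩ p hp
  obtain ⟨w, hw⟩ :=
    (RepresentsOver.zmod_of_forall_padicInt hlocal (by omega : m ≠ 0)).exists_intModEq
  have hnonneg : 0 ≤ w ⬝ᵥ M *ᵥ w := by
    rcases eq_or_ne w 0 with rfl | hw0
    · simp
    · exact (hpos w hw0).le
  exact ⟨_, toNat_mem_AP_of_modEq ham hnonneg hw, w, (Int.toNat_of_nonneg hnonneg).symm⟩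

theorem locally_represented_AP_meets_represented_set
    (n : ℕ) (hn : 4 ≤ n) (M : Matrix (Fin n) (Fin n) ℤ)
    (hsym : M.IsSymm)
    (hpos : ∀ v : Fin n → ℤ, v ≠ 0 → 0 < v ⬝ᵥ M.mulVec v)
    (hgcd : Finset.univ.gcd (fun ij : Fin n × Fin n => M ij.1 ij.2) = 1)
    (a m : ℕ) (hadm : Admissible a m)
    (hloc : ∀ N ∈ AP a m, ∀ (p : ℕ) (_ : Fact p.Prime),
      ∃ v : Fin n → ℤ_[p],
        v ⬝ᵥ (M.map (Int.cast : ℤ → ℤ_[p])).mulVec v = (N : ℤ_[p])) :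
    ∃ N ∈ AP a m, ∃ v : Fin n → ℤ, v ⬝ᵥ M.mulVec v = (N : ℤ) :=
  locally_represented_AP_meets_represented_set_general n M hpos a m hadm hloc
end

section
/- Let r ≥ 1 be an integer and let E be the set of positive integers n not expressible as n = x² + 3y² + 9z² + 9^r·w² with x, y, z, w ∈ ℤ. Then E cannot be written as a union of fewer than r+1 admissible arithmetic progressions: if E = A_{a₁,m₁} ∪ ... ∪ A_{a_t,m_t} with each A_{a_i,m_i} an admissible arithmetic progression, then t ≥ r + 1. -/
def diagForm (a b c d x y z w : ℤ) : ℤ := a * x ^ 2 + b * y ^ 2 + c * z ^ 2 + d * w ^ 2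

def excludedSet (a b c d : ℤ) : Set ℕ :=
  {n | 0 < n ∧ ¬∃ x y z w : ℤ, (n : ℤ) = diagForm a b c d x y z w}

def IsUniversalMod (a b c d : ℤ) (M : ℕ) : Prop :=
  ∀ A : ℤ, ∃ x y z w : ℤ, diagForm a b c d x y z w ≡ A [ZMOD M]

theorem diagForm_modEq {n a b c d x y z w x' y' z' w' : ℤ} (hx : x ≡ x' [ZMOD n])
    (hy : y ≡ y' [ZMOD n]) (hz : z ≡ z' [ZMOD n]) (hw : w ≡ w' [ZMOD n]) :
    diagForm a b c d x y z w ≡ diagForm a b c d x' y' z' w' [ZMOD n] := by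
  unfold diagForm
  gcongr

theorem Int.exists_modEq_and_modEq {m n : ℤ} (h : IsCoprime m n) (u v : ℤ) :
    ∃ s : ℤ, s ≡ u [ZMOD m] ∧ s ≡ v [ZMOD n] := by
  obtain ⟨α, β, hαβ⟩ := h
  refine ⟨u * (β * n) + v * (α * m), (Int.modEq_iff_dvd.mpr ⟨α * (v - u), ?_⟩).symm,
    (Int.modEq_iff_dvd.mpr ⟨β * (u - v), ?_⟩).symm⟩
  · linear_combination u * hαβ
  · linear_combination v * hαβ

namespace IsUniversalMod

variable {a b c d : ℤ}

theorem one : IsUniversalMod a b c d 1 :=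
  fun _ => ⟨0, 0, 0, 0, by simp [Int.modEq_one]⟩

theorem mul {m n : ℕ} (hmn : m.Coprime n) (hm : IsUniversalMod a b c d m)
    (hn : IsUniversalMod a b c d n) : IsUniversalMod a b c d (m * n) := by
  intro A
  obtain ⟨x₁, y₁, z₁, w₁, h₁⟩ := hm A
  obtain ⟨x₂, y₂, z₂, w₂, h₂⟩ := hn A
  have crt := Int.exists_modEq_and_modEq (Nat.isCoprime_iff_coprime.mpr hmn)
  obtain ⟨x, hx₁, hx₂⟩ := crt x₁ x₂
  obtain ⟨y, hy₁, hy₂⟩ := crt y₁ y₂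
  obtain ⟨z, hz₁, hz₂⟩ := crt z₁ z₂
  obtain ⟨w, hw₁, hw₂⟩ := crt w₁ w₂
  refine ⟨x, y, z, w, ?_⟩
  rw [Nat.cast_mul, ← Int.modEq_and_modEq_iff_modEq_mul (by simpa using hmn)]
  exact ⟨(diagForm_modEq hx₁ hy₁ hz₁ hw₁).trans h₁,
    (diagForm_modEq hx₂ hy₂ hz₂ hw₂).trans h₂⟩

theorem of_prime_pow {M : ℕ} (hM : M ≠ 0)
    (h : ∀ p e : ℕ, p.Prime → 0 < e → p ^ e ∣ M → IsUniversalMod a b c d (p ^ e)) :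
    IsUniversalMod a b c d M := by
  induction M using Nat.recOnPosPrimePosCoprime with
  | prime_pow p e hp he => exact h p e hp he dvd_rfl
  | zero => exact absurd rfl hM
  | one => exact one
  | coprime m n _ _ hmn ihm ihn =>
    exact (ihm (left_ne_zero_of_mul hM) fun p e hp he hd => h p e hp he (hd.mul_right n)).mul hmn
      (ihn (right_ne_zero_of_mul hM) fun p e hp he hd => h p e hp he (hd.mul_left m))

end IsUniversalMod

theorem exists_mem_AP_of_modEq {A M : ℕ} (hM : 0 < M) {N : ℤ} (h : N ≡ A [ZMOD M])
    (hAN : A ≤ N) : ∃ n ∈ AP A M, (n : ℤ) = N := by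
  obtain ⟨q, hq⟩ := Int.modEq_iff_dvd.mp h.symm
  have hq0 : 0 ≤ q :=
    nonneg_of_mul_nonneg_right (hq ▸ sub_nonneg.mpr hAN) (by exact_mod_cast hM)
  exact ⟨A + M * q.toNat, ⟨q.toNat, rfl⟩, by push_cast [Int.toNat_of_nonneg hq0]; linarith⟩

theorem exists_mem_AP_diagForm_eq {a b c d : ℤ} (ha : 0 < a) (hb : 0 ≤ b) (hc : 0 ≤ c)
    (hd : 0 ≤ d) {M : ℕ} (hM : 0 < M) (hu : IsUniversalMod a b c d M) (A : ℕ) :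
    ∃ n ∈ AP A M, ∃ x y z w : ℤ, (n : ℤ) = diagForm a b c d x y z w := by
  obtain ⟨x, y, z, w, h⟩ := hu A
  -- Moving `x` within its class modulo `M` makes the value as large as we like.
  set x' : ℤ := x + M * (|x| + A)
  have hx' : x' ≡ x [ZMOD M] := Int.modEq_add_fac_self
  have hAx' : (A : ℤ) ≤ x' := by
    have : |x| + A ≤ M * (|x| + A) := le_mul_of_one_le_left (by positivity) (by exact_mod_cast hM)
    linarith [neg_abs_le x]
  have hle : (A : ℤ) ≤ diagForm a b c d x' y z w := by
    unfold diagForm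
    nlinarith [sq_nonneg y, sq_nonneg z, sq_nonneg w, sq_nonneg (x' - 1)]
  obtain ⟨n, hn, hnN⟩ := exists_mem_AP_of_modEq hM
    ((diagForm_modEq hx' .rfl .rfl .rfl).trans h) hle
  exact ⟨n, hn, x', y, z, w, hnN⟩

theorem Int.exists_sq_modEq_two_pow {t : ℤ} (ht : t ≡ 1 [ZMOD 8]) (e : ℕ) :
    ∃ x : ℤ, x ^ 2 ≡ t [ZMOD 2 ^ e] := by
  suffices ∀ e : ℕ, ∃ x : ℤ, Odd x ∧ (2 : ℤ) ^ (e + 3) ∣ t - x ^ 2 by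
    obtain ⟨x, -, hx⟩ := this e
    exact ⟨x, Int.modEq_iff_dvd.mpr ((pow_dvd_pow 2 (by omega)).trans hx)⟩
  intro e
  induction e with
  | zero => exact ⟨1, odd_one, by simpa using Int.modEq_iff_dvd.mp ht.symm⟩
  | succ e ih =>
    obtain ⟨x, ⟨d, rfl⟩, s, hs⟩ := ih
    rcases Int.even_or_odd s with ⟨c, rfl⟩ | ⟨c, rfl⟩
    · exact ⟨2 * d + 1, odd_two_mul_add_one d, c, by linear_combination hs⟩
    · refine ⟨2 * (d + 2 ^ (e + 1)) + 1, odd_two_mul_add_one _, c - d - 2 ^ e, ?_⟩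
      linear_combination hs

theorem Int.exists_sq_modEq_prime_pow {p : ℕ} (hp : p.Prime) (hp2 : p ≠ 2) {t x₀ : ℤ}
    (hx₀ : ¬(p : ℤ) ∣ x₀) (h : x₀ ^ 2 ≡ t [ZMOD p]) (e : ℕ) :
    ∃ x : ℤ, x ^ 2 ≡ t [ZMOD p ^ e] := by
  have hpz : Prime (p : ℤ) := Nat.prime_iff_prime_int.mp hp
  have hp2z : ¬(p : ℤ) ∣ 2 := fun hd =>
    hp2 ((Nat.prime_dvd_prime_iff_eq hp Nat.prime_two).mp (by exact_mod_cast hd))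
  suffices ∀ e : ℕ, ∃ x : ℤ, ¬(p : ℤ) ∣ x ∧ (p : ℤ) ^ (e + 1) ∣ t - x ^ 2 by
    obtain ⟨x, -, hx⟩ := this e
    exact ⟨x, Int.modEq_iff_dvd.mpr ((pow_dvd_pow _ (by omega)).trans hx)⟩
  intro e
  induction e with
  | zero => exact ⟨x₀, hx₀, by simpa using Int.modEq_iff_dvd.mp h⟩
  | succ e ih =>
    obtain ⟨x, hx, s, hs⟩ := ih
    -- Newton step: `2 * x` is invertible modulo `p`.
    obtain ⟨u, v, huv⟩ : IsCoprime (p : ℤ) (2 * x) :=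
      (Prime.coprime_iff_not_dvd hpz).mpr fun hd => (hpz.dvd_mul.mp hd).elim hp2z hx
    have hps : (p : ℤ) ∣ (p : ℤ) ^ (e + 1) * s * v :=
      Dvd.intro ((p : ℤ) ^ e * s * v) (by ring)
    refine ⟨x + (p : ℤ) ^ (e + 1) * s * v, fun hd => hx ((dvd_add_left hps).mp hd),
      s * u - (p : ℤ) ^ e * s ^ 2 * v ^ 2, ?_⟩
    linear_combination hs - (p : ℤ) ^ (e + 1) * s * huv

theorem isUniversalMod_prime_pow_of_ne_three (r : ℕ) {p : ℕ} (hp : p.Prime) (hp3 : p ≠ 3)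
    (e : ℕ) :
    IsUniversalMod 1 3 9 (9 ^ r) (p ^ e) := by
  intro A
  suffices ∃ y z w x : ℤ, x ^ 2 ≡ A - (3 * y ^ 2 + 9 * z ^ 2 + 9 ^ r * w ^ 2) [ZMOD p ^ e] by
    obtain ⟨y, z, w, x, hx⟩ := this
    refine ⟨x, y, z, w, ?_⟩
    push_cast
    have := hx.add_right (3 * y ^ 2 + 9 * z ^ 2 + 9 ^ r * w ^ 2)
    rw [sub_add_cancel] at this
    simpa only [diagForm, one_mul, add_assoc] using this
  rcases eq_or_ne p 2 with rfl | hp2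
  · have mod_eight : ∀ B : ZMod 8, ∃ y z w : ZMod 8, 1 + 3 * y ^ 2 + z ^ 2 + w ^ 2 = B := by
      decide
    obtain ⟨y, z, w, h⟩ := mod_eight A
    obtain ⟨y, rfl⟩ := ZMod.intCast_surjective y
    obtain ⟨z, rfl⟩ := ZMod.intCast_surjective z
    obtain ⟨w, rfl⟩ := ZMod.intCast_surjective w
    refine ⟨y, z, w, Int.exists_sq_modEq_two_pow ((ZMod.intCast_eq_intCast_iff _ _ 8).mp ?_) e⟩
    push_cast
    rw [show (9 : ZMod 8) = 1 from rfl, one_pow, ← h]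
    ring
  · -- take `x ≡ 1` and `y = 0`, and write `A - 1 ≡ (3 * z) ^ 2 + (3 ^ r * w) ^ 2` modulo `p`
    have := Fact.mk hp
    have h3 : (3 : ZMod p) ≠ 0 := fun h => hp3 <|
      (Nat.prime_dvd_prime_iff_eq hp Nat.prime_three).mp ((ZMod.natCast_eq_zero_iff 3 p).mp
        (by exact_mod_cast h))
    obtain ⟨u, v, huv⟩ := ZMod.sq_add_sq p (A - 1)
    obtain ⟨z, hz⟩ := ZMod.intCast_surjective (u / 3 : ZMod p)
    obtain ⟨w, hw⟩ := ZMod.intCast_surjective (v / 3 ^ r : ZMod p)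
    refine ⟨0, z, w, Int.exists_sq_modEq_prime_pow hp hp2 (x₀ := 1)
      (by exact_mod_cast hp.not_dvd_one) ?_ e⟩
    refine (ZMod.intCast_eq_intCast_iff _ _ p).mp ?_
    push_cast
    have hu : (9 : ZMod p) * (u / 3) ^ 2 = u ^ 2 := by field_simp; ring
    have hv : (9 : ZMod p) ^ r * (v / 3 ^ r) ^ 2 = v ^ 2 := by
      rw [show (9 : ZMod p) ^ r = (3 ^ r) ^ 2 by rw [← pow_mul, mul_comm, pow_mul]; norm_num]
      field_simp
    rw [hz, hw]
    linear_combination huv + hu + hv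

theorem isUniversalMod_of_not_three_dvd (r : ℕ) {M : ℕ} (hM : M ≠ 0) (h3 : ¬3 ∣ M) :
    IsUniversalMod 1 3 9 (9 ^ r) M :=
  IsUniversalMod.of_prime_pow hM fun p e hp he hpe =>
    isUniversalMod_prime_pow_of_ne_three r hp
      (by rintro rfl; exact h3 ((dvd_pow_self 3 he.ne').trans hpe)) e

theorem three_dvd_of_AP_subset_excludedSet (r : ℕ) {A M : ℕ} (hM : 0 < M)
    (h : AP A M ⊆ excludedSet 1 3 9 (9 ^ r)) : 3 ∣ M := by
  by_contra h3
  obtain ⟨n, hn, hrep⟩ := exists_mem_AP_diagForm_eq one_pos (by norm_num) (by norm_num)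
    (by positivity) hM (isUniversalMod_of_not_three_dvd r hM.ne' h3) A
  exact (h hn).2 hrep

theorem padicValNat_add_of_pow_dvd {p a b : ℕ} [Fact p.Prime] (ha : a ≠ 0)
    (hb : p ^ (padicValNat p a + 1) ∣ b) : padicValNat p (a + b) = padicValNat p a := by
  have hab : a + b ≠ 0 := by omega
  refine le_antisymm ?_ ?_
  · rw [← Nat.lt_succ_iff, ← not_le, ← padicValNat_dvd_iff_le hab, Nat.dvd_add_left hb]
    exact pow_succ_padicValNat_not_dvd ha
  · rw [← padicValNat_dvd_iff_le hab, Nat.dvd_add_right pow_padicValNat_dvd]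
    exact (pow_dvd_pow p (Nat.le_succ _)).trans hb

theorem padicValNat_eq_of_mem_AP {p A M n : ℕ} [Fact p.Prime] (hA : A ≠ 0)
    (hAM : padicValNat p A < padicValNat p M) (hn : n ∈ AP A M) :
    padicValNat p n = padicValNat p A := by
  obtain ⟨x, rfl⟩ := hn
  exact padicValNat_add_of_pow_dvd hA ((pow_dvd_pow p hAM).trans pow_padicValNat_dvd |>.mul_right x)

theorem eq_of_mul_pow_mem_AP {p c A M i j : ℕ} [hp : Fact p.Prime] (hadm : Admissible A M)
    (hpM : p ∣ M) (hc : ¬p ∣ c) (hi : c * p ^ i ∈ AP A M) (hj : c * p ^ j ∈ AP A M) :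
    i = j := by
  obtain ⟨hA, -, hval⟩ := hadm
  have hc0 : c ≠ 0 := by rintro rfl; exact hc (dvd_zero p)
  have key : ∀ k, c * p ^ k ∈ AP A M → k = padicValNat p A := fun k hk => by
    rw [← padicValNat_eq_of_mem_AP hA.ne' (hval p hp.out hpM) hk,
      padicValNat.mul hc0 (pow_ne_zero k hp.out.ne_zero), padicValNat.prime_pow,
      padicValNat.eq_zero_of_not_dvd hc, zero_add]
  exact (key i hi).trans (key j hj).symm

theorem Int.sq_add_three_mul_ne_two (x t : ℤ) : x ^ 2 + 3 * t ≠ 2 := by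
  have key : ∀ a : ZMod 3, a ^ 2 ≠ 2 := by decide
  intro h
  apply key x
  simpa [show (3 : ZMod 3) = 0 from rfl] using congrArg (Int.cast : ℤ → ZMod 3) h

theorem Int.three_dvd_of_three_dvd_sq_add_sq {x y : ℤ} (h : 3 ∣ x ^ 2 + y ^ 2) :
    3 ∣ x ∧ 3 ∣ y := by
  have key : ∀ a b : ZMod 3, a ^ 2 + b ^ 2 = 0 → a = 0 ∧ b = 0 := by decide
  have := key x y (by exact_mod_cast (ZMod.intCast_zmod_eq_zero_iff_dvd _ 3).mpr h)
  exact ⟨(ZMod.intCast_zmod_eq_zero_iff_dvd x 3).mp this.1,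
    (ZMod.intCast_zmod_eq_zero_iff_dvd y 3).mp this.2⟩

theorem sq_add_three_mul_sq_add_three_mul_sq_ne_two_mul_nine_pow (k : ℕ) (x y z : ℤ) :
    x ^ 2 + 3 * y ^ 2 + 3 * z ^ 2 ≠ 2 * 9 ^ k := by
  induction k generalizing x y z with
  | zero => exact fun h => Int.sq_add_three_mul_ne_two x (y ^ 2 + z ^ 2) (by linear_combination h)
  | succ k ih =>
    intro h
    rw [pow_succ (9 : ℤ) k] at h
    obtain ⟨x, rfl⟩ : 3 ∣ x := Int.prime_three.dvd_of_dvd_pow (n := 2)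
      ⟨6 * 9 ^ k - y ^ 2 - z ^ 2, by linear_combination h⟩
    obtain ⟨⟨y, rfl⟩, z, rfl⟩ := Int.three_dvd_of_three_dvd_sq_add_sq (x := y) (y := z)
      ⟨2 * 9 ^ k - x ^ 2, by linarith⟩
    exact ih x y z (by linarith)

theorem sq_add_three_mul_sq_add_nine_mul_sq_ne_two_mul_three_pow (k : ℕ) (x y z : ℤ) :
    x ^ 2 + 3 * y ^ 2 + 9 * z ^ 2 ≠ 2 * 3 ^ (2 * k + 1) := by
  have h3 : (3 : ℤ) ^ (2 * k + 1) = 3 * 9 ^ k := by rw [pow_succ, pow_mul]; ring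
  intro h
  rw [h3] at h
  obtain ⟨x, rfl⟩ : 3 ∣ x := Int.prime_three.dvd_of_dvd_pow (n := 2)
    ⟨2 * 9 ^ k - y ^ 2 - 3 * z ^ 2, by linear_combination h⟩
  exact sq_add_three_mul_sq_add_three_mul_sq_ne_two_mul_nine_pow k y x z (by linarith)

theorem diagForm_ne_two {r : ℕ} (hr : 1 ≤ r) (x y z w : ℤ) :
    diagForm 1 3 9 (9 ^ r) x y z w ≠ 2 := by
  obtain ⟨r, rfl⟩ := Nat.exists_eq_add_of_le' hr
  exact fun h => Int.sq_add_three_mul_ne_two x (y ^ 2 + 3 * z ^ 2 + 3 * 9 ^ r * w ^ 2)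
    (by unfold diagForm at h; linear_combination h)

theorem diagForm_ne_two_mul_three_pow {r k : ℕ} (hk : k < r) (x y z w : ℤ) :
    diagForm 1 3 9 (9 ^ r) x y z w ≠ 2 * 3 ^ (2 * k + 1) := by
  unfold diagForm
  intro h
  rcases eq_or_ne w 0 with rfl | hw
  · exact sq_add_three_mul_sq_add_nine_mul_sq_ne_two_mul_three_pow k x y z (by simpa using h)
  · -- a nonzero `w` already contributes `9 ^ r ≥ 3 * 3 ^ (2 * k + 1)`
    have hw2 : 0 < w ^ 2 := by positivity
    have h9 : 3 * 3 ^ (2 * k + 1) ≤ (9 : ℤ) ^ r := by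
      calc 3 * 3 ^ (2 * k + 1) = (9 : ℤ) ^ (k + 1) := by rw [pow_succ, pow_mul]; ring
        _ ≤ 9 ^ r := pow_le_pow_right₀ (by norm_num) hk
    nlinarith [sq_nonneg x, sq_nonneg y, sq_nonneg z, pow_pos (three_pos (α := ℤ)) (2 * k + 1)]

theorem two_mul_three_pow_mem_excludedSet {r k : ℕ} (hr : 1 ≤ r) (hk : k ≤ r) :
    2 * 3 ^ (2 * k - 1) ∈ excludedSet 1 3 9 (9 ^ r) := by
  refine ⟨by positivity, ?_⟩
  rintro ⟨x, y, z, w, h⟩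
  rcases k with _ | k
  · exact diagForm_ne_two hr x y z w (by simpa using h.symm)
  · rw [show 2 * (k + 1) - 1 = 2 * k + 1 by omega] at h
    exact diagForm_ne_two_mul_three_pow hk x y z w (by exact_mod_cast h.symm)

theorem excluded_set_needs_at_least_r_add_one_APs
    (r : ℕ) (hr : 1 ≤ r) (t : ℕ) (a m : Fin t → ℕ)
    (hadm : ∀ i, Admissible (a i) (m i))
    (hE : {n : ℕ | 0 < n ∧
        ¬∃ x y z w : ℤ, (n : ℤ) = x ^ 2 + 3 * y ^ 2 + 9 * z ^ 2 + 9 ^ r * w ^ 2}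
      = ⋃ i, AP (a i) (m i)) :
    r + 1 ≤ t := by
  have hE' : excludedSet 1 3 9 (9 ^ r) = ⋃ i, AP (a i) (m i) := by
    simpa only [excludedSet, diagForm, one_mul] using hE
  -- `2 * k - 1` is truncated: `k = 0` gives the element `2`
  have hcover : ∀ k : Fin (r + 1), ∃ i, 2 * 3 ^ (2 * (k : ℕ) - 1) ∈ AP (a i) (m i) :=
    fun k => Set.mem_iUnion.mp
      (hE' ▸ two_mul_three_pow_mem_excludedSet hr (Nat.lt_succ_iff.mp k.isLt))
  choose f hf using hcover
  have hf_inj : Function.Injective f := by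
    intro k l hkl
    have hsub : AP (a (f l)) (m (f l)) ⊆ excludedSet 1 3 9 (9 ^ r) :=
      hE' ▸ Set.subset_iUnion (fun i => AP (a i) (m i)) (f l)
    have h3 := three_dvd_of_AP_subset_excludedSet r ((hadm _).1.trans (hadm _).2.1) hsub
    have hexp := eq_of_mul_pow_mem_AP (hadm (f l)) h3 (by norm_num) (hkl ▸ hf k) (hf l)
    ext
    omega
  simpa using Fintype.card_le_of_injective f hf_inj
end

section
/- A positive integer n is NOT expressible as n = 2x² + 3y² + 6z² + 6w² with x, y, z, w ∈ ℤ if and only if n ≡ 1 (mod 3); that is, the excluded set of the form ⟨2,3,6,6⟩ equals the arithmetic progression A_{1,3}. -/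
set_option maxHeartbeats 1000000

namespace ThreeSq


def Qt (a b c d e f x y z : ℤ) : ℤ :=
  a*x^2 + b*y^2 + c*z^2 + 2*d*(x*y) + 2*e*(x*z) + 2*f*(y*z)

def RepT (a b c d e f n : ℤ) : Prop := ∃ x y z : ℤ, Qt a b c d e f x y z = n

def detT (a b c d e f : ℤ) : ℤ := a*b*c + 2*d*e*f - a*f^2 - b*e^2 - c*d^2

lemma rep_Sy (a b c d e f t n : ℤ) :
    RepT a b (c + b*t^2 + 2*f*t) d (e + d*t) (f + b*t) n ↔ RepT a b c d e f n := by
  constructor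
  · rintro ⟨x, y, z, h⟩
    exact ⟨x, y + t*z, z, by rw [← h]; unfold Qt; ring⟩
  · rintro ⟨x, y, z, h⟩
    exact ⟨x, y - t*z, z, by rw [← h]; unfold Qt; ring⟩

lemma rep_Swyz (a b c d e f n : ℤ) :
    RepT a c b e d f n ↔ RepT a b c d e f n := by
  constructor
  · rintro ⟨x, y, z, h⟩
    exact ⟨x, z, y, by rw [← h]; unfold Qt; ring⟩
  · rintro ⟨x, y, z, h⟩
    exact ⟨x, z, y, by rw [← h]; unfold Qt; ring⟩

lemma rep_Swxy (a b c d e f n : ℤ) :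
    RepT b a c d f e n ↔ RepT a b c d e f n := by
  constructor
  · rintro ⟨x, y, z, h⟩
    exact ⟨y, x, z, by rw [← h]; unfold Qt; ring⟩
  · rintro ⟨x, y, z, h⟩
    exact ⟨y, x, z, by rw [← h]; unfold Qt; ring⟩

lemma rep_Xy (a b c d e f t n : ℤ) :
    RepT a (b + 2*d*t + a*t^2) c (d + a*t) e (f + e*t) n ↔ RepT a b c d e f n := by
  constructor
  · rintro ⟨x, y, z, h⟩
    exact ⟨x + t*y, y, z, by rw [← h]; unfold Qt; ring⟩
  · rintro ⟨x, y, z, h⟩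
    exact ⟨x - t*y, y, z, by rw [← h]; unfold Qt; ring⟩

lemma rep_Xz (a b c d e f t n : ℤ) :
    RepT a b (c + 2*e*t + a*t^2) d (e + a*t) (f + d*t) n ↔ RepT a b c d e f n := by
  constructor
  · rintro ⟨x, y, z, h⟩
    exact ⟨x + t*z, y, z, by rw [← h]; unfold Qt; ring⟩
  · rintro ⟨x, y, z, h⟩
    exact ⟨x - t*z, y, z, by rw [← h]; unfold Qt; ring⟩

lemma exists_shear (a d : ℤ) (ha : 0 < a) : ∃ t : ℤ, 2 * |d + a * t| ≤ a := by
  have h1 : 0 ≤ d % a := Int.emod_nonneg d (ne_of_gt ha)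
  have h2 : d % a < a := Int.emod_lt_of_pos d ha
  have h0 : d + a * (-(d / a)) = d % a := by
    rw [Int.emod_def]; ring
  by_cases h : 2 * (d % a) ≤ a
  · exact ⟨-(d / a), by rw [h0, abs_of_nonneg h1]; exact h⟩
  · refine ⟨-(d / a) - 1, ?_⟩
    have h3 : d + a * (-(d / a) - 1) = d % a - a := by rw [← h0]; ring
    rw [h3, abs_of_nonpos (by omega)]
    omega

lemma inner : ∀ (P : ℕ) (a b c d e f : ℤ), 0 < a → 0 < a*b - d^2 →
    0 < detT a b c d e f → a*b - d^2 ≤ (P : ℤ) →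
    ∃ b' c' d' e' f',
      0 < a*b' - d'^2 ∧ detT a b' c' d' e' f' = detT a b c d e f ∧
      2*|a*f' - d'*e'| ≤ a*b' - d'^2 ∧ a*b' - d'^2 ≤ a*c' - e'^2 ∧
      (∀ n, RepT a b' c' d' e' f' n ↔ RepT a b c d e f n) := by
  intro P
  induction P with
  | zero => intro a b c d e f ha hp hdet hP; omega
  | succ P ih =>
    intro a b c d e f ha hp hdet hP
    obtain ⟨t, ht⟩ := exists_shear (a*b - d^2) (a*f - d*e) hp
    have hq : a*(f + b*t) - d*(e + d*t) = (a*f - d*e) + (a*b - d^2) * t := by ring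
    have hdet₁ : detT a b (c + b*t^2 + 2*f*t) d (e + d*t) (f + b*t) = detT a b c d e f := by
      unfold detT; ring
    have hrep₁ := rep_Sy a b c d e f t
    by_cases hcase : a*b - d^2 ≤ a*(c + b*t^2 + 2*f*t) - (e + d*t)^2
    · refine ⟨b, c + b*t^2 + 2*f*t, d, e + d*t, f + b*t, hp, hdet₁, ?_, hcase, hrep₁⟩
      rw [hq]; exact ht
    · have hid : (a*b - d^2) * (a*(c + b*t^2 + 2*f*t) - (e + d*t)^2)
          - (a*(f + b*t) - d*(e + d*t))^2
          = a * detT a b (c + b*t^2 + 2*f*t) d (e + d*t) (f + b*t) := by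
        unfold detT; ring
    -- positivity of the new leading minor after swap
      have hr : 0 < a*(c + b*t^2 + 2*f*t) - (e + d*t)^2 := by
        rcases lt_trichotomy (a*(c + b*t^2 + 2*f*t) - (e + d*t)^2) 0 with h | h | h
        · exfalso
          nlinarith [sq_nonneg (a*(f + b*t) - d*(e + d*t)), hdet₁ ▸ hdet]
        · exfalso
          rw [hdet₁] at hid
          nlinarith [sq_nonneg (a*(f + b*t) - d*(e + d*t))]
        · exact h
      have hdet₂ : detT a (c + b*t^2 + 2*f*t) b (e + d*t) d (f + b*t)
          = detT a b (c + b*t^2 + 2*f*t) d (e + d*t) (f + b*t) := by unfold detT; ring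
      obtain ⟨b', c', d', e', f', h1, h2, h3, h4, h5⟩ :=
        ih a (c + b*t^2 + 2*f*t) b (e + d*t) d (f + b*t) ha hr
          (by rw [hdet₂, hdet₁]; exact hdet) (by omega)
      refine ⟨b', c', d', e', f', h1, ?_, h3, h4, ?_⟩
      · rw [h2, hdet₂, hdet₁]
      · intro n
        exact (h5 n).trans ((rep_Swyz a b (c + b*t^2 + 2*f*t) d (e + d*t) (f + b*t) n).trans
          (hrep₁ n))








lemma outer : ∀ (A : ℕ) (a b c d e f : ℤ), 0 < a → a ≤ (A : ℤ) → 0 < a*b - d^2 →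
    0 < detT a b c d e f → detT a b c d e f ≤ 2 →
    ∀ n, RepT a b c d e f n →
    ∃ x y z : ℤ, x^2 + y^2 + detT a b c d e f * z^2 = n := by
  intro A
  induction A with
  | zero => intro a b c d e f ha hA; omega
  | succ A ih =>
    intro a b c d e f ha hA hp hdet hdet2 n hrep
    obtain ⟨b₁, c₁, d₁, e₁, f₁, hp₁, hdeteq, hq₁, hpr₁, hrep₁⟩ :=
      inner (a*b - d^2).toNat a b c d e f ha hp hdet (Int.self_le_toNat _)
    obtain ⟨t, ht⟩ := exists_shear a d₁ ha
    -- x-shear: b₂ = b₁ + 2 d₁ t + a t², d₂ = d₁ + a t, f₂ = f₁ + e₁ t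
    have hm1 : a*(b₁ + 2*d₁*t + a*t^2) - (d₁ + a*t)^2 = a*b₁ - d₁^2 := by ring
    have hm2 : a*(f₁ + e₁*t) - (d₁ + a*t)*e₁ = a*f₁ - d₁*e₁ := by ring
    have hdet₂ : detT a (b₁ + 2*d₁*t + a*t^2) c₁ (d₁ + a*t) e₁ (f₁ + e₁*t)
        = detT a b₁ c₁ d₁ e₁ f₁ := by unfold detT; ring
    have hrep₂ := rep_Xy a b₁ c₁ d₁ e₁ f₁ t
    have hrepo : ∀ m, RepT a (b₁ + 2*d₁*t + a*t^2) c₁ (d₁ + a*t) e₁ (f₁ + e₁*t) m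
        ↔ RepT a b c d e f m := fun m => (hrep₂ m).trans (hrep₁ m)
    by_cases hb : b₁ + 2*d₁*t + a*t^2 < a
    · -- swap x↔y and recurse on smaller a
      have hab2 : 0 < a * (b₁ + 2*d₁*t + a*t^2) := by nlinarith [sq_nonneg (d₁ + a*t), hp₁, hm1]
      have hb2pos : 0 < b₁ + 2*d₁*t + a*t^2 := by
        rcases le_or_gt (b₁ + 2*d₁*t + a*t^2) 0 with h | h
        · exfalso; nlinarith
        · exact h
      have hdet₃ : detT (b₁ + 2*d₁*t + a*t^2) a c₁ (d₁ + a*t) (f₁ + e₁*t) e₁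
          = detT a (b₁ + 2*d₁*t + a*t^2) c₁ (d₁ + a*t) e₁ (f₁ + e₁*t) := by unfold detT; ring
      have hle : b₁ + 2*d₁*t + a*t^2 ≤ (A : ℤ) := by omega
      have hminor : 0 < (b₁ + 2*d₁*t + a*t^2) * a - (d₁ + a*t)^2 := by
        rw [mul_comm, hm1]; exact hp₁
    -- det conditions
      have hdall : detT (b₁ + 2*d₁*t + a*t^2) a c₁ (d₁ + a*t) (f₁ + e₁*t) e₁
          = detT a b c d e f := by rw [hdet₃, hdet₂, hdeteq]
      have := ih (b₁ + 2*d₁*t + a*t^2) a c₁ (d₁ + a*t) (f₁ + e₁*t) e₁ hb2pos hle hminor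
        (by rw [hdall]; exact hdet) (by rw [hdall]; exact hdet2) n
        ((rep_Swxy a (b₁ + 2*d₁*t + a*t^2) c₁ (d₁ + a*t) e₁ (f₁ + e₁*t) n).mpr
          ((hrepo n).mpr hrep))
      rwa [hdall] at this
    · -- a ≤ b₂ : conclude a = 1 and finish
      push_neg at hb
      have h4d : 4*(d₁ + a*t)^2 ≤ a^2 := by
        have h1 := mul_self_le_mul_self (by positivity : (0:ℤ) ≤ 2*|d₁ + a*t|) ht
        have h2 : |d₁ + a*t| * |d₁ + a*t| = (d₁ + a*t)^2 := by
          rw [abs_mul_abs_self]; ring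
        nlinarith [h1, h2]
      have haab : a*a ≤ a*(b₁ + 2*d₁*t + a*t^2) := mul_le_mul_of_nonneg_left hb ha.le
      have h3a : 3*a^2 ≤ 4*(a*b₁ - d₁^2) := by nlinarith [haab, hm1, h4d]
      have hq4 : 4*(a*f₁ - d₁*e₁)^2 ≤ (a*b₁ - d₁^2)^2 := by
        have h1 := mul_self_le_mul_self (by positivity : (0:ℤ) ≤ 2*|a*f₁ - d₁*e₁|) hq₁
        have h2 : |a*f₁ - d₁*e₁| * |a*f₁ - d₁*e₁| = (a*f₁ - d₁*e₁)^2 := by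
          rw [abs_mul_abs_self]; ring
        nlinarith [h1, h2]
      have hPR : (a*b₁ - d₁^2)*(a*c₁ - e₁^2) - (a*f₁ - d₁*e₁)^2
          = a * detT a b₁ c₁ d₁ e₁ f₁ := by unfold detT; ring
      have hdpos : 0 < detT a b₁ c₁ d₁ e₁ f₁ := by rw [hdeteq]; exact hdet
      have hd2 : detT a b₁ c₁ d₁ e₁ f₁ ≤ 2 := by rw [hdeteq]; exact hdet2
      have hpr' : (a*b₁ - d₁^2)^2 ≤ (a*b₁ - d₁^2)*(a*c₁ - e₁^2) := by
        nlinarith [mul_le_mul_of_nonneg_left hpr₁ hp₁.le]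
      have h3p : 3*(a*b₁ - d₁^2)^2 ≤ 4*a*detT a b₁ c₁ d₁ e₁ f₁ := by
        nlinarith [hPR, hq4, hpr']
      have s1 : 9*a^4 ≤ 16*(a*b₁ - d₁^2)^2 := by
        nlinarith [mul_self_le_mul_self (by positivity : (0:ℤ) ≤ 3*a^2) h3a]
      have s2 : 27*a^4 ≤ 128*a := by
        have hL2 : a*detT a b₁ c₁ d₁ e₁ f₁ ≤ a*2 :=
          mul_le_mul_of_nonneg_left hd2 ha.le
        nlinarith [h3p, s1]
      have ha3 : 27*a^3 ≤ 128 := by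
        have : (27*a^3)*a ≤ 128*a := by nlinarith [s2]
        exact Int.le_of_mul_le_mul_right this ha
      have ha1 : a = 1 := by
        by_contra hne
        have h2a : 2 ≤ a := by omega
        have : 8 ≤ a^3 := by nlinarith [sq_nonneg a, sq_nonneg (a-2)]
        omega
      subst ha1
      have hd0 : d₁ + 1*t = 0 := by
        have h4d' : 4*(d₁ + 1*t)^2 ≤ 1 := by nlinarith [h4d]
        have h0 := sq_nonneg (d₁ + 1*t)
        have hsq : (d₁ + 1*t)^2 = 0 := by
          rcases h0.lt_or_eq with hlt | heq
          · exfalso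
            have h1 : 1 ≤ (d₁ + 1*t)^2 := hlt
            linarith
          · exact heq.symm
        exact sq_eq_zero_iff.mp hsq
      have hd0' : d₁ + t = 0 := by linarith [hd0]
      have hb2 : b₁ + 2*d₁*t + 1*t^2 = 1*b₁ - d₁^2 := by linear_combination (d₁ + t) * hd0'
      have hf2 : f₁ + e₁*t = 1*f₁ - d₁*e₁ := by linear_combination e₁ * hd0'
      have hbb : 0 < 1*b₁ - d₁^2 := hp₁
      have hdetf : (1*b₁ - d₁^2)*(1*c₁ - e₁^2) - (1*f₁ - d₁*e₁)^2
          = detT 1 b₁ c₁ d₁ e₁ f₁ := by unfold detT; ring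
      have hb21 : 1*b₁ - d₁^2 = 1 := by
        have h8 : 3*(1*b₁ - d₁^2)^2 ≤ 8 := by nlinarith [h3p, hd2]
        have h6p : 6*(1*b₁ - d₁^2) ≤ 11 := by nlinarith [sq_nonneg (1*b₁ - d₁^2 - 1)]
        have hlt2 : (1*b₁ - d₁^2) < 2 := by linarith
        have hge1 : 1 ≤ 1*b₁ - d₁^2 := hbb
        omega
      have hf0 : 1*f₁ - d₁*e₁ = 0 := by
        have h1 : 2*|1*f₁ - d₁*e₁| ≤ 1 := by
          have := hq₁; rw [hb21] at this; exact this
        have h2 := abs_nonneg (1*f₁ - d₁*e₁)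
        have h3 : |1*f₁ - d₁*e₁| = 0 := by linarith
        exact abs_eq_zero.mp h3
      have hcL : 1*c₁ - e₁^2 = detT 1 b₁ c₁ d₁ e₁ f₁ := by
        rw [hb21, hf0] at hdetf
        linarith [hdetf]
      have hrepfin : RepT 1 (b₁ + 2*d₁*t + 1*t^2) (c₁ + 2*e₁*(-e₁) + 1*(-e₁)^2)
          (d₁ + 1*t) (e₁ + 1*(-e₁)) (f₁ + e₁*t + (d₁ + 1*t)*(-e₁)) n := by
        apply (rep_Xz 1 (b₁ + 2*d₁*t + 1*t^2) c₁ (d₁ + 1*t) e₁ (f₁ + e₁*t) (-e₁) n).mpr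
        exact ((rep_Xy 1 b₁ c₁ d₁ e₁ f₁ t n).trans (hrep₁ n)).mpr hrep
      have e1 : b₁ + 2*d₁*t + 1*t^2 = 1 := by rw [hb2]; exact hb21
      have e2 : f₁ + e₁*t + (d₁ + 1*t)*(-e₁) = 0 := by
        rw [hd0]; rw [hf2]; rw [hf0]; ring
      have e3' : c₁ + 2*e₁*(-e₁) + 1*(-e₁)^2 = 1*c₁ - e₁^2 := by ring
      have e0e : e₁ + 1*(-e₁) = 0 := by ring
      rw [e1, e2, e3', hd0, e0e] at hrepfin
      obtain ⟨x, y, z, hxyz⟩ := hrepfin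
      refine ⟨x, y, z, ?_⟩
      rw [← hxyz, ← hdeteq, ← hcL]
      unfold Qt; ring


theorem diag_rep (a b c d e f n : ℤ) (ha : 0 < a) (hm : 0 < a*b - d^2)
    (h1 : 0 < detT a b c d e f) (h2 : detT a b c d e f ≤ 2) (h : RepT a b c d e f n) :
    ∃ x y z : ℤ, x^2 + y^2 + detT a b c d e f * z^2 = n :=
  outer a.toNat a b c d e f ha (Int.self_le_toNat a) hm h1 h2 n h







/-- Dirichlet: a prime `c > B` with `c % 8 = g` and prescribed residue mod `M`. -/
lemma exists_prime_cong (g M : ℕ) (hM : Odd M) (hM1 : 0 < M) (hg : g = 1 ∨ g = 3)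
    (δ : ZMod M) (hδ : IsUnit δ) (B : ℕ) :
    ∃ c : ℕ, c.Prime ∧ B < c ∧ c % 8 = g ∧ (c : ZMod M) = δ := by
  have hco : Nat.Coprime 8 M := by
    have h2 : Nat.Coprime 2 M := Nat.coprime_two_left.mpr hM
    exact Nat.Coprime.pow_left 3 h2
  have : NeZero (8 * M) := ⟨by positivity⟩
  let e := ZMod.chineseRemainder hco
  have hgu : IsUnit ((g : ZMod 8)) := by
    rcases hg with h | h <;> subst h <;> decide
  have hu : IsUnit (e.symm ((g : ZMod 8), δ)) := by
    obtain ⟨ginv, hginv⟩ := isUnit_iff_exists_inv.mp hgu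
    obtain ⟨dinv, hdinv⟩ := isUnit_iff_exists_inv.mp hδ
    have hpair : ((g : ZMod 8), δ) * (ginv, dinv) = 1 := by
      rw [Prod.mk_mul_mk, hginv, hdinv]; rfl
    exact (isUnit_iff_exists_inv.mpr ⟨_, hpair⟩).map e.symm
  obtain ⟨p, hpB, hpp, hpe⟩ := Nat.forall_exists_prime_gt_and_eq_mod hu B
  have h1 : e ((p : ZMod (8*M))) = ((p : ZMod 8 × ZMod M)) :=
    map_natCast (e : ZMod (8*M) →+* ZMod 8 × ZMod M) p
  have h2 : e ((p : ZMod (8*M))) = ((g : ZMod 8), δ) := by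
    rw [hpe]; exact e.apply_symm_apply _
  have h12 := h1.symm.trans h2
  refine ⟨p, hpp, hpB, ?_, ?_⟩
  · have h3 := congrArg Prod.fst h12
    rw [Prod.fst_natCast] at h3
    have h4 := (ZMod.natCast_eq_natCast_iff' p g 8).mp h3
    omega
  · have h3 := congrArg Prod.snd h12
    rw [Prod.snd_natCast] at h3
    exact h3

/-- From a Jacobi symbol value 1 at an odd prime, get an integer square root. -/
lemma sqrt_of_jacobi (c : ℕ) (hc : c.Prime) (D : ℤ) (h : jacobiSym (-D) c = 1) :
    ∃ b : ℤ, (c : ℤ) ∣ b^2 + D := by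
  haveI : Fact c.Prime := ⟨hc⟩
  have hsq : IsSquare ((-D : ℤ) : ZMod c) := ZMod.isSquare_of_jacobiSym_eq_one h
  obtain ⟨r, hr⟩ := hsq
  refine ⟨(r.val : ℤ), ?_⟩
  have : (((r.val : ℤ)^2 + D : ℤ) : ZMod c) = 0 := by
    push_cast
    rw [ZMod.natCast_val, ZMod.cast_id]
    have hthis : ((-D : ℤ) : ZMod c) = r * r := hr
    push_cast at hthis
    rw [sq]
    linear_combination -hthis
  exact (ZMod.intCast_zmod_eq_zero_iff_dvd _ _).mp this

/-- The key construction: positive ternary form of small determinant representing N. -/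
lemma construct (L N D α : ℤ) (c : ℕ) (hcp : c.Prime)
    (hD : N * D = L + α^2 * (c : ℤ))
    (hsq : ∃ b : ℤ, (c : ℤ) ∣ b^2 + D)
    (hNpos : 0 < N) (hLpos : 0 < L) (hL2 : L ≤ 2) :
    ∃ x y z : ℤ, x^2 + y^2 + L * z^2 = N := by
  obtain ⟨b, k, hk⟩ := hsq
  have hcpos : (0 : ℤ) < c := by exact_mod_cast hcp.pos
  -- a := k ;  a*c = D + b^2
  have hac : (c : ℤ) * k = b^2 + D := hk.symm
  have hdet : detT N k (c : ℤ) α 0 b = L := by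
    unfold detT
    linear_combination N * hac + hD
  have hminor : 0 < N * k - α^2 := by
    have h1 : (N * k - α^2) * c = L + N * b^2 := by linear_combination N * hac + hD
    have h2 : 0 < L + N * b^2 := by positivity
    by_contra hcon
    push_neg at hcon
    nlinarith
  have hrep : RepT N k (c : ℤ) α 0 b N := ⟨1, 0, 0, by unfold Qt; ring⟩
  have := diag_rep N k (c : ℤ) α 0 b N hNpos (by linarith [hminor]) (by rw [hdet]; exact hLpos)
    (by rw [hdet]; exact hL2) hrep
  rwa [hdet] at this

/-- descend a ⟨1,1,2⟩ representation of 2s to three squares for s -/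
lemma descend_two (s x y z : ℤ) (h : 2 * s = x^2 + y^2 + 2*z^2) :
    ∃ p q r : ℤ, s = p^2 + q^2 + r^2 := by
  have hE : Even (x^2 + y^2) := ⟨s - z^2, by linarith⟩
  have hxy : Even x ↔ Even y := by
    have h1 := Int.even_add.mp hE
    constructor
    · intro hx
      exact (Int.even_pow.mp (h1.mp (Int.even_pow.mpr ⟨hx, by norm_num⟩))).1
    · intro hy
      exact (Int.even_pow.mp (h1.mpr (Int.even_pow.mpr ⟨hy, by norm_num⟩))).1
  obtain ⟨p, hp⟩ := Int.even_add.mpr hxy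
  obtain ⟨q, hq⟩ := Int.even_sub.mpr hxy
  refine ⟨p, q, z, ?_⟩
  have hx : x = p + q := by omega
  have hy : y = p - q := by omega
  subst hx hy
  have h2 : 2*s = 2*(p^2 + q^2 + z^2) := by linear_combination h
  linarith [h2]

/-- pair two integers of equal parity into 2v²+2w² -/
lemma pair_parity (x y : ℤ) (h : Even x ↔ Even y) :
    ∃ v w : ℤ, x^2 + y^2 = 2*v^2 + 2*w^2 := by
  obtain ⟨v, hv⟩ := Int.even_add.mpr h
  obtain ⟨w, hw⟩ := Int.even_sub.mpr h
  refine ⟨v, w, ?_⟩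
  have hx : x = v + w := by omega
  have hy : y = v - w := by omega
  subst hx hy; ring

/-- three squares → ⟨1,2,2⟩ -/
lemma to122 (s x y z : ℤ) (h : s = x^2 + y^2 + z^2) :
    ∃ u v w : ℤ, s = u^2 + 2*v^2 + 2*w^2 := by
  by_cases hxy : Even x ↔ Even y
  · obtain ⟨v, w, hvw⟩ := pair_parity x y hxy
    exact ⟨z, v, w, by rw [h]; linarith [hvw]⟩
  · by_cases hxz : Even x ↔ Even z
    · obtain ⟨v, w, hvw⟩ := pair_parity x z hxz
      exact ⟨y, v, w, by rw [h]; linarith [hvw]⟩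
    · have hyz : Even y ↔ Even z := by tauto
      obtain ⟨v, w, hvw⟩ := pair_parity y z hyz
      exact ⟨x, v, w, by rw [h]; linarith [hvw]⟩




/-- combine congruence and sign information into `J(-D|c) = 1`. -/
lemma jacobi_key (c : ℕ) (s D : ℤ)
    (hmod : (s * D) % (c : ℤ) = 1 % (c : ℤ))
    (hprod : jacobiSym (-1) c * jacobiSym s c = 1) :
    jacobiSym (-D) c = 1 := by
  have h1 : jacobiSym (s*D) c = 1 := by
    rw [jacobiSym.mod_left' hmod, jacobiSym.one_left]
  rw [jacobiSym.mul_left] at h1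
  have hneg : jacobiSym (-D) c = jacobiSym (-1) c * jacobiSym D c := by
    rw [← jacobiSym.mul_left]; norm_num
  rcases jacobiSym.trichotomy s c with hs | hs | hs
  · rw [hs, zero_mul] at h1; norm_num at h1
  · rw [hs, one_mul] at h1
    rw [hs, mul_one] at hprod
    rw [hneg, h1, hprod, mul_one]
  · rw [hs] at h1 hprod
    have hD : jacobiSym D c = -1 := by linarith
    have hm1 : jacobiSym (-1) c = -1 := by linarith
    rw [hneg, hD, hm1]; norm_num

lemma caseI_jacobi (s c : ℕ) (hs1 : s % 4 = 1) (hc8 : c % 8 = 1)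
    (hcs : (s:ℤ) ∣ (c:ℤ) + 1) (hsodd : Odd s) (hcodd : Odd c) :
    jacobiSym (-1) c * jacobiSym (s:ℤ) c = 1 := by
  have hJm1c : jacobiSym (-1) c = 1 := by
    rw [jacobiSym.at_neg_one hcodd, ZMod.χ₄_nat_one_mod_four (by omega)]
  have hrec : jacobiSym (c:ℤ) s = jacobiSym (s:ℤ) c :=
    jacobiSym.quadratic_reciprocity_one_mod_four (by omega) hsodd
  have hcmod : (c:ℤ) % (s:ℤ) = (-1) % (s:ℤ) := by
    have h := Int.emod_emod_of_dvd
    have hd : (s:ℤ) ∣ (-1) - (c:ℤ) := by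
      rw [show (-1 : ℤ) - (c:ℤ) = -((c:ℤ) + 1) by ring]
      exact dvd_neg.mpr hcs
    exact Int.modEq_iff_dvd.mpr hd
  have hJcs : jacobiSym (c:ℤ) s = jacobiSym (-1) s := jacobiSym.mod_left' hcmod
  have hJm1s : jacobiSym (-1) s = 1 := by
    rw [jacobiSym.at_neg_one hsodd, ZMod.χ₄_nat_one_mod_four hs1]
  rw [hJm1c, one_mul, ← hrec, hJcs, hJm1s]

lemma caseII_jacobi (s M c : ℕ) (hsM : s = 2*M) (hM : M % 4 = 1) (hc8 : c % 8 = 1)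
    (hdvd : (M:ℤ) ∣ (c:ℤ) + 1) (hModd : Odd M) (hcodd : Odd c) :
    jacobiSym (-1) c * jacobiSym (s:ℤ) c = 1 := by
  have hJm1c : jacobiSym (-1) c = 1 := by
    rw [jacobiSym.at_neg_one hcodd, ZMod.χ₄_nat_one_mod_four (by omega)]
  have hsplit : jacobiSym (s:ℤ) c = jacobiSym 2 c * jacobiSym (M:ℤ) c := by
    rw [← jacobiSym.mul_left]
    congr 1
    push_cast [hsM]; ring
  have hJ2 : jacobiSym 2 c = 1 := by
    rw [jacobiSym.at_two hcodd, ZMod.χ₈_nat_mod_eight, hc8]; decide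
  have hrec : jacobiSym (c:ℤ) M = jacobiSym (M:ℤ) c :=
    jacobiSym.quadratic_reciprocity_one_mod_four (by omega) hModd
  have hcmod : (c:ℤ) % (M:ℤ) = (-1) % (M:ℤ) := by
    refine Int.modEq_iff_dvd.mpr ?_
    rw [show (-1 : ℤ) - (c:ℤ) = -((c:ℤ) + 1) by ring]
    exact dvd_neg.mpr hdvd
  have hJcM : jacobiSym (c:ℤ) M = jacobiSym (-1) M := jacobiSym.mod_left' hcmod
  have hJm1M : jacobiSym (-1) M = 1 := by
    rw [jacobiSym.at_neg_one hModd, ZMod.χ₄_nat_one_mod_four hM]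
  rw [hJm1c, one_mul, hsplit, hJ2, one_mul, ← hrec, hJcM, hJm1M]

lemma caseIII_jacobi (s M c : ℕ) (hsM : s = 2*M) (hM : M % 4 = 3) (hc8 : c % 8 = 3)
    (hdvd : (M:ℤ) ∣ (c:ℤ) + 1) (hModd : Odd M) (hcodd : Odd c) :
    jacobiSym (-1) c * jacobiSym (s:ℤ) c = 1 := by
  have hJm1c : jacobiSym (-1) c = -1 := by
    rw [jacobiSym.at_neg_one hcodd, ZMod.χ₄_nat_three_mod_four (by omega)]
  have hsplit : jacobiSym (s:ℤ) c = jacobiSym 2 c * jacobiSym (M:ℤ) c := by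
    rw [← jacobiSym.mul_left]
    congr 1
    push_cast [hsM]; ring
  have hJ2 : jacobiSym 2 c = -1 := by
    rw [jacobiSym.at_two hcodd, ZMod.χ₈_nat_mod_eight, hc8]; decide
  have hrec : jacobiSym (M:ℤ) c = -jacobiSym (c:ℤ) M :=
    jacobiSym.quadratic_reciprocity_three_mod_four hM (by omega)
  have hcmod : (c:ℤ) % (M:ℤ) = (-1) % (M:ℤ) := by
    refine Int.modEq_iff_dvd.mpr ?_
    rw [show (-1 : ℤ) - (c:ℤ) = -((c:ℤ) + 1) by ring]
    exact dvd_neg.mpr hdvd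
  have hJcM : jacobiSym (c:ℤ) M = jacobiSym (-1) M := jacobiSym.mod_left' hcmod
  have hJm1M : jacobiSym (-1) M = -1 := by
    rw [jacobiSym.at_neg_one hModd, ZMod.χ₄_nat_three_mod_four hM]
  rw [hJm1c, hsplit, hJ2, hrec, hJcM, hJm1M]
  ring

lemma caseIV_jacobi (s c : ℕ) (hs : s % 8 = 3) (hc8 : c % 8 = 1)
    (hdvd : (s:ℤ) ∣ 2*(c:ℤ) + 1) (hsodd : Odd s) (hcodd : Odd c) :
    jacobiSym (-1) c * jacobiSym (s:ℤ) c = 1 := by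
  have hJm1c : jacobiSym (-1) c = 1 := by
    rw [jacobiSym.at_neg_one hcodd, ZMod.χ₄_nat_one_mod_four (by omega)]
  have hrec : jacobiSym (c:ℤ) s = jacobiSym (s:ℤ) c :=
    jacobiSym.quadratic_reciprocity_one_mod_four (by omega) hsodd
  -- J(c|s) = J(4c|s) = J(-2|s) = χ₈' s = 1
  have hgcd2 : Int.gcd 2 s = 1 := by
    have h := Nat.coprime_two_left.mpr hsodd
    simpa [Int.gcd] using h
  have h4 : jacobiSym 4 s = 1 := by
    rw [show (4:ℤ) = 2^2 by norm_num]
    exact jacobiSym.sq_one' hgcd2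
  have h4c : jacobiSym (4*(c:ℤ)) s = jacobiSym (c:ℤ) s := by
    rw [jacobiSym.mul_left, h4, one_mul]
  have hcmod : (4*(c:ℤ)) % (s:ℤ) = (-2) % (s:ℤ) := by
    refine Int.modEq_iff_dvd.mpr ?_
    rw [show (-2 : ℤ) - 4*(c:ℤ) = -2*(2*(c:ℤ) + 1) by ring]
    exact Dvd.dvd.mul_left hdvd (-2)
  have hJm2 : jacobiSym (4*(c:ℤ)) s = jacobiSym (-2) s := jacobiSym.mod_left' hcmod
  have hchi : jacobiSym (-2) s = 1 := by
    have h2 : s % 2 = 1 := by omega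
    rw [jacobiSym.at_neg_two hsodd, ZMod.χ₈'_nat_eq_if_mod_eight, hs, h2]
    norm_num
  rw [hJm1c, one_mul, ← hrec, ← h4c, hJm2, hchi]




theorem sum3sq (s : ℕ)
    (hs : s % 8 = 1 ∨ s % 8 = 2 ∨ s % 8 = 3 ∨ s % 8 = 5 ∨ s % 8 = 6) :
    ∃ x y z : ℤ, (s:ℤ) = x^2 + y^2 + z^2 := by
  have hspos : 0 < s := by omega
  haveI : NeZero s := ⟨by omega⟩
  by_cases hA : s % 8 = 1 ∨ s % 8 = 5
  · -- Case I
    have hsodd : Odd s := Nat.odd_iff.mpr (by omega)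
    have hs41 : s % 4 = 1 := by omega
    obtain ⟨c, hcp, hcB, hc8, hcδ⟩ :=
      exists_prime_cong 1 s hsodd hspos (Or.inl rfl) (-1) (IsUnit.neg isUnit_one) s
    have hcodd : Odd c := Nat.odd_iff.mpr (by omega)
    have hdvd : (s:ℤ) ∣ (c:ℤ) + 1 := by
      have h0 : (((c:ℤ) + 1 : ℤ) : ZMod s) = 0 := by
        push_cast
        rw [hcδ]; ring
      exact (ZMod.intCast_zmod_eq_zero_iff_dvd _ s).mp h0
    obtain ⟨D, hD⟩ := hdvd
    have hmod : (((s:ℤ)) * D) % (c:ℤ) = 1 % (c:ℤ) := by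
      refine Int.modEq_iff_dvd.mpr ?_
      exact ⟨-1, by rw [show (1:ℤ) - (s:ℤ)*D = -(c:ℤ) from by rw [← hD]; ring]; ring⟩
    have hprod := caseI_jacobi s c hs41 hc8 ⟨D, hD⟩ hsodd hcodd
    have hJ := jacobi_key c (s:ℤ) D hmod hprod
    have hb := sqrt_of_jacobi c hcp D hJ
    obtain ⟨x, y, z, hxyz⟩ := construct 1 (s:ℤ) D 1 c hcp
      (by linear_combination -hD) hb (by exact_mod_cast hspos) one_pos (by norm_num)
    exact ⟨x, y, z, by linarith⟩
  · by_cases hB : s % 8 = 2 ∨ s % 8 = 6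
    · -- Cases II and III
      have hsM : s = 2 * (s/2) := by omega
      set M := s / 2 with hMdef
      have hModd : Odd M := Nat.odd_iff.mpr (by omega)
      have hMpos : 0 < M := by omega
      haveI : NeZero M := ⟨by omega⟩
      have hg : (if s % 8 = 2 then 1 else 3) = 1 ∨ (if s % 8 = 2 then 1 else 3) = 3 := by
        split_ifs <;> simp
      obtain ⟨c, hcp, hcB, hc8, hcδ⟩ :=
        exists_prime_cong (if s % 8 = 2 then 1 else 3) M hModd hMpos hg
          (-1) (IsUnit.neg isUnit_one) s
      have hcodd : Odd c := Nat.odd_iff.mpr (by rcases hg with h | h <;> omega)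
      have hMdvd : (M:ℤ) ∣ (c:ℤ) + 1 := by
        have h0 : (((c:ℤ) + 1 : ℤ) : ZMod M) = 0 := by
          push_cast
          rw [hcδ]; ring
        exact (ZMod.intCast_zmod_eq_zero_iff_dvd _ M).mp h0
      have hMdvd' : M ∣ c + 1 := by exact_mod_cast hMdvd
      have h2dvd : 2 ∣ c + 1 := by
        have := Nat.odd_iff.mp hcodd; omega
      have hsdvd : s ∣ c + 1 := by
        rw [hsM]
        exact Nat.Coprime.mul_dvd_of_dvd_of_dvd (Nat.coprime_two_left.mpr hModd) h2dvd hMdvd'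
      have hdvd : (s:ℤ) ∣ (c:ℤ) + 1 := by exact_mod_cast hsdvd
      obtain ⟨D, hD⟩ := hdvd
      have hmod : (((s:ℤ)) * D) % (c:ℤ) = 1 % (c:ℤ) := by
        refine Int.modEq_iff_dvd.mpr ?_
        exact ⟨-1, by rw [show (1:ℤ) - (s:ℤ)*D = -(c:ℤ) from by rw [← hD]; ring]; ring⟩
      have hprod : jacobiSym (-1) c * jacobiSym (s:ℤ) c = 1 := by
        by_cases h2 : s % 8 = 2
        · have hc8' : c % 8 = 1 := by simpa [h2] using hc8
          exact caseII_jacobi s M c hsM (by omega) hc8' hMdvd hModd hcodd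
        · have h6 : s % 8 = 6 := by omega
          have hc8' : c % 8 = 3 := by simp [h2] at hc8; exact hc8
          exact caseIII_jacobi s M c hsM (by omega) hc8' hMdvd hModd hcodd
      have hJ := jacobi_key c (s:ℤ) D hmod hprod
      have hb := sqrt_of_jacobi c hcp D hJ
      obtain ⟨x, y, z, hxyz⟩ := construct 1 (s:ℤ) D 1 c hcp
        (by linear_combination -hD) hb (by exact_mod_cast hspos) one_pos (by norm_num)
      exact ⟨x, y, z, by linarith⟩
    · -- Case IV : s % 8 = 3
      have hs3 : s % 8 = 3 := by omega
      have hsodd : Odd s := Nat.odd_iff.mpr (by omega)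
      have hv2 : ((((s+1)/2 : ℕ) : ZMod s)) * 2 = 1 := by
        have h1 : (((s+1)/2) * 2 : ℕ) = s + 1 := by omega
        have h2 : (((((s+1)/2) * 2 : ℕ)) : ZMod s) = ((s+1 : ℕ) : ZMod s) := by rw [h1]
        push_cast at h2
        rw [ZMod.natCast_self] at h2
        rw [h2]; ring
      have hδu : IsUnit (-((((s+1)/2 : ℕ) : ZMod s))) := by
        refine isUnit_iff_exists_inv.mpr ⟨-2, ?_⟩
        have : -((((s+1)/2 : ℕ) : ZMod s)) * (-2) = ((((s+1)/2 : ℕ) : ZMod s)) * 2 := by ring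
        rw [this, hv2]
      obtain ⟨c, hcp, hcB, hc8, hcδ⟩ :=
        exists_prime_cong 1 s hsodd hspos (Or.inl rfl) _ hδu s
      have hcodd : Odd c := Nat.odd_iff.mpr (by omega)
      have hdvd : (s:ℤ) ∣ 2*(c:ℤ) + 1 := by
        have h0 : ((2*(c:ℤ) + 1 : ℤ) : ZMod s) = 0 := by
          push_cast
          rw [hcδ]
          have h2 : (2 : ZMod s) * -((((s+1)/2 : ℕ) : ZMod s)) + 1
              = -(((((s+1)/2 : ℕ) : ZMod s)) * 2) + 1 := by ring
          rw [h2, hv2]; ring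
        exact (ZMod.intCast_zmod_eq_zero_iff_dvd _ s).mp h0
      obtain ⟨D, hD⟩ := hdvd
      have hmod : (((s:ℤ)) * D) % (c:ℤ) = 1 % (c:ℤ) := by
        refine Int.modEq_iff_dvd.mpr ?_
        exact ⟨-2, by rw [show (1:ℤ) - (s:ℤ)*D = -2*(c:ℤ) from by rw [← hD]; ring]; ring⟩
      have hprod := caseIV_jacobi s c hs3 hc8 ⟨D, hD⟩ hsodd hcodd
      have hJ := jacobi_key c (s:ℤ) D hmod hprod
      have hb := sqrt_of_jacobi c hcp D hJ
      obtain ⟨x, y, z, hxyz⟩ := construct 2 (2*(s:ℤ)) D 2 c hcp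
        (by linear_combination (-2)*hD) hb (by positivity) (by norm_num) (by norm_num)
      exact descend_two (s:ℤ) x y z hxyz.symm




lemma rep122 (s : ℕ)
    (hs : s % 8 = 1 ∨ s % 8 = 2 ∨ s % 8 = 3 ∨ s % 8 = 5 ∨ s % 8 = 6) :
    ∃ u v w : ℤ, (s:ℤ) = u^2 + 2*v^2 + 2*w^2 := by
  obtain ⟨x, y, z, h⟩ := sum3sq s hs
  exact to122 (s:ℤ) x y z h

lemma quart_rep (n : ℕ) (hn : 0 < n) (h3 : n % 3 ≠ 1) :
    ∃ x y z w : ℤ, (n : ℤ) = 2*x^2 + 3*y^2 + 6*z^2 + 6*w^2 := by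
  have hlt : n % 3 = 0 ∨ n % 3 = 1 ∨ n % 3 = 2 := by omega
  rcases hlt with h0 | h1 | h2
  · -- n = 3m
    set m := n / 3 with hm
    have hnm : n = 3 * m := by omega
    have hmpos : 0 < m := by omega
    by_cases hg : m % 8 = 1 ∨ m % 8 = 2 ∨ m % 8 = 3 ∨ m % 8 = 5 ∨ m % 8 = 6
    · obtain ⟨u, v, w, huvw⟩ := rep122 m hg
      refine ⟨0, u, v, w, ?_⟩
      have : (n:ℤ) = 3 * (m:ℤ) := by exact_mod_cast congrArg (Nat.cast : ℕ → ℤ) hnm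
      rw [this, huvw]; ring
    · by_cases h4 : m = 4
      · refine ⟨0, 0, 1, 1, ?_⟩
        have : (n:ℤ) = 12 := by
          have : n = 12 := by omega
          exact_mod_cast congrArg (Nat.cast : ℕ → ℤ) this
        rw [this]; ring
      · have hm7 : 7 ≤ m := by omega
        have hs8 : (m-6) % 8 = 1 ∨ (m-6) % 8 = 2 ∨ (m-6) % 8 = 3 ∨ (m-6) % 8 = 5 ∨
            (m-6) % 8 = 6 := by omega
        obtain ⟨u, v, w, huvw⟩ := rep122 (m-6) hs8
        refine ⟨3, u, v, w, ?_⟩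
        have hn' : (n:ℤ) = 3 * ((m:ℕ) - 6 : ℕ) + 18 := by
          have : n = 3 * (m - 6) + 18 := by omega
          exact_mod_cast congrArg (Nat.cast : ℕ → ℤ) this
        rw [hn', huvw]; ring
  · exact absurd h1 h3
  · -- n ≡ 2 mod 3
    by_cases hn2 : n = 2
    · refine ⟨1, 0, 0, 0, ?_⟩
      have : (n:ℤ) = 2 := by exact_mod_cast congrArg (Nat.cast : ℕ → ℤ) hn2
      rw [this]; ring
    · set s := (n - 2) / 3 with hs
      have hns : n = 3 * s + 2 := by omega
      by_cases hg : s % 8 = 1 ∨ s % 8 = 2 ∨ s % 8 = 3 ∨ s % 8 = 5 ∨ s % 8 = 6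
      · obtain ⟨u, v, w, huvw⟩ := rep122 s hg
        refine ⟨1, u, v, w, ?_⟩
        have hn' : (n:ℤ) = 3 * (s:ℕ) + 2 := by exact_mod_cast congrArg (Nat.cast : ℕ → ℤ) hns
        rw [hn', huvw]; ring
      · have hs0 : s ≠ 0 := by omega
        have hs4 : 4 ≤ s := by omega
        have hs8 : (s-2) % 8 = 1 ∨ (s-2) % 8 = 2 ∨ (s-2) % 8 = 3 ∨ (s-2) % 8 = 5 ∨
            (s-2) % 8 = 6 := by omega
        obtain ⟨u, v, w, huvw⟩ := rep122 (s-2) hs8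
        refine ⟨2, u, v, w, ?_⟩
        have hn' : (n:ℤ) = 3 * ((s:ℕ) - 2 : ℕ) + 8 := by
          have : n = 3 * (s - 2) + 8 := by omega
          exact_mod_cast congrArg (Nat.cast : ℕ → ℤ) this
        rw [hn', huvw]; ring



end ThreeSq

theorem excluded_set_two_three_six_six (n : ℕ) (hn : 0 < n) :
    (¬∃ x y z w : ℤ,
        (n : ℤ) = 2 * x ^ 2 + 3 * y ^ 2 + 6 * z ^ 2 + 6 * w ^ 2) ↔
      n % 3 = 1 := by
  constructor
  · intro hne
    by_contra hmod
    exact hne (ThreeSq.quart_rep n hn hmod)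
  · rintro h1 ⟨x, y, z, w, heq⟩
    have hcast := congrArg (Int.cast : ℤ → ZMod 3) heq
    push_cast at hcast
    have h30 : (3 : ZMod 3) = 0 := rfl
    have h60 : (6 : ZMod 3) = 0 := rfl
    rw [h30, h60] at hcast
    have hn3 : ((n : ℕ) : ZMod 3) = 1 := by
      rw [show ((n : ℕ) : ZMod 3) = ((n % 3 : ℕ) : ZMod 3) from (ZMod.natCast_mod n 3).symm, h1]
      rfl
    rw [hn3] at hcast
    have : ∀ t : ZMod 3, (1 : ZMod 3) ≠ 2 * t ^ 2 + 0 * ((y:ZMod 3))^2 + 0*((z:ZMod 3))^2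
        + 0*((w:ZMod 3))^2 := by
      intro t
      have : ∀ t : ZMod 3, (1 : ZMod 3) ≠ 2 * t ^ 2 := by decide
      simpa using this t
    exact this (x : ZMod 3) hcast
end
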